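/- Fix real constants ω > B ≥ 0 and M > 1. For each integer i ≥ 1 and x, y ∈ ℝ⁴ define the sliced LSZ propagator C^i(x,y) = ∫_{M^{-2i}}^{M^{-2(i-1)}} ( ω² / (2π·sinh ωt)² ) · exp( −(ω/2)·[ (cosh Bt / sinh ωt)·‖x − y‖² + ((cosh ωt − cosh Bt)/ sinh ωt)·(‖x‖² + ‖y‖²) + i·(sinh Bt / sinh ωt)·σ(x,y) ] ) dt, where σ(x,y) = (2/θ)(x₁y₂ − x₂y₁ + x₃y₄ − x₄y₃) for a fixed θ > 0. Then there exist constants K > 0 and c > 0, depending only on ω, B, M, such that for all i ≥ 1 and all x, y ∈ ℝ⁴, |C^i(x,y)| ≤ K·M^{2i}·exp( −c·( M^{i}·‖x − y‖ + M^{-i}·‖x + y‖ ) ). -/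

import Mathlib

/-!
For `0 < t ≤ 1` the oscillating phase has modulus one, `ωt ≤ sinh ωt ≤ ω t exp ω`, and
`cosh ωt - cosh Bt ≥ (ω² - B²) t² / 2` because `0 ≤ B < ω`. Together with
`‖x‖² + ‖y‖² ≥ ‖x + y‖² / 2` this bounds the integrand by the heat-kernel-like expression
`(4π² t²)⁻¹ exp (-‖x - y‖² / (2 t exp ω) - (ω² - B²) t ‖x + y‖² / (8 exp ω))`.
On the slice `M^{-2i} ≤ t ≤ M^{2-2i}` this gives the prefactor `M^{4i}` and Gaussian decay in
`M^i ‖x - y‖` and `M^{-i} ‖x + y‖`, which `-p² / (4c) ≤ c - p` turns into exponential decay;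
the slice has length at most `M^{2-2i}`.
-/

open MeasureTheory Real

/-- The symplectic pairing `x·θ⁻¹·y` on `ℝ⁴`. -/
noncomputable def symplecticPairing (θ : ℝ) (x y : EuclideanSpace ℝ (Fin 4)) : ℝ :=
  (2 / θ) * (x 0 * y 1 - x 1 * y 0 + x 2 * y 3 - x 3 * y 2)

/-- The slice `i` of the LSZ propagator. -/
noncomputable def slicedLSZPropagator (ω B θ M : ℝ) (i : ℕ)
    (x y : EuclideanSpace ℝ (Fin 4)) : ℂ :=
  ∫ t in Set.Icc (M ^ (-2 * (i : ℝ))) (M ^ (-2 * ((i : ℝ) - 1))),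
    Complex.ofReal (ω ^ 2 / (2 * π * Real.sinh (ω * t)) ^ 2) *
      Complex.exp (-(Complex.ofReal ω / 2) *
        (Complex.ofReal (Real.cosh (B * t) / Real.sinh (ω * t)) *
            Complex.ofReal (‖x - y‖ ^ 2)
          + Complex.ofReal ((Real.cosh (ω * t) - Real.cosh (B * t)) / Real.sinh (ω * t)) *
              Complex.ofReal (‖x‖ ^ 2 + ‖y‖ ^ 2)
          + Complex.I * Complex.ofReal (Real.sinh (B * t) / Real.sinh (ω * t)) *
              Complex.ofReal (symplecticPairing θ x y)))

namespace Real

lemma sinh_le_mul_exp (y : ℝ) : sinh y ≤ y * exp y := by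
  have hsplit : exp (-y) = exp (-2 * y) * exp y := by rw [← exp_add]; ring_nf
  have h := mul_le_mul_of_nonneg_right (add_one_le_exp (-2 * y)) (exp_pos y).le
  rw [sinh_eq, hsplit]
  linarith

lemma cosh_sub_cosh (a b : ℝ) :
    cosh a - cosh b = 2 * sinh ((a + b) / 2) * sinh ((a - b) / 2) := by
  obtain ⟨p, q, rfl, rfl⟩ : ∃ p q, a = p + q ∧ b = p - q :=
    ⟨(a + b) / 2, (a - b) / 2, by ring, by ring⟩
  rw [show (p + q + (p - q)) / 2 = p by ring, show (p + q - (p - q)) / 2 = q by ring,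
    cosh_add, cosh_sub]
  ring

lemma sq_sub_sq_div_two_le_cosh_sub_cosh {a b : ℝ} (hb : 0 ≤ b) (hba : b ≤ a) :
    (a ^ 2 - b ^ 2) / 2 ≤ cosh a - cosh b := by
  have hp : 0 ≤ (a + b) / 2 := by linarith
  have hq : 0 ≤ (a - b) / 2 := by linarith
  have h := mul_le_mul (self_le_sinh_iff.2 hp) (self_le_sinh_iff.2 hq) hq
    (hp.trans (self_le_sinh_iff.2 hp))
  rw [cosh_sub_cosh]
  linarith

lemma sinh_mul_le_mul_exp {ω t : ℝ} (hω : 0 ≤ ω) (ht : 0 ≤ t) (ht1 : t ≤ 1) :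
    sinh (ω * t) ≤ ω * exp ω * t :=
  calc sinh (ω * t) ≤ ω * t * exp (ω * t) := sinh_le_mul_exp _
    _ ≤ ω * t * exp ω := by gcongr; nlinarith
    _ = ω * exp ω * t := by ring

lemma rpow_neg_two_mul_natCast {M : ℝ} (hM : 0 < M) (i : ℕ) :
    M ^ (-2 * (i : ℝ)) = ((M ^ i) ^ 2)⁻¹ := by
  rw [show -2 * (i : ℝ) = -((2 * i : ℕ) : ℝ) by push_cast; ring, rpow_neg hM.le, rpow_natCast,
    pow_mul']

lemma rpow_neg_two_mul_natCast_sub_one {M : ℝ} (hM : 0 < M) (i : ℕ) :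
    M ^ (-2 * ((i : ℝ) - 1)) = M ^ 2 / (M ^ i) ^ 2 := by
  rw [show -2 * ((i : ℝ) - 1) = 2 + -2 * (i : ℝ) by ring, rpow_add hM,
    rpow_neg_two_mul_natCast hM, rpow_two, div_eq_mul_inv]

end Real

lemma neg_sq_div_four_mul_le_sub {c : ℝ} (hc : 0 < c) (p : ℝ) : -(p ^ 2 / (4 * c)) ≤ c - p := by
  rw [← sub_nonneg, show c - p - -(p ^ 2 / (4 * c)) = (p - 2 * c) ^ 2 / (4 * c) by field_simp; ring]
  positivity

noncomputable def lszIntegrand (ω B θ : ℝ) (x y : EuclideanSpace ℝ (Fin 4)) (t : ℝ) : ℂ :=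
  Complex.ofReal (ω ^ 2 / (2 * π * Real.sinh (ω * t)) ^ 2) *
    Complex.exp (-(Complex.ofReal ω / 2) *
      (Complex.ofReal (Real.cosh (B * t) / Real.sinh (ω * t)) *
          Complex.ofReal (‖x - y‖ ^ 2)
        + Complex.ofReal ((Real.cosh (ω * t) - Real.cosh (B * t)) / Real.sinh (ω * t)) *
            Complex.ofReal (‖x‖ ^ 2 + ‖y‖ ^ 2)
        + Complex.I * Complex.ofReal (Real.sinh (B * t) / Real.sinh (ω * t)) *
            Complex.ofReal (symplecticPairing θ x y)))

lemma slicedLSZPropagator_eq_setIntegral (ω B θ M : ℝ) (i : ℕ) (x y : EuclideanSpace ℝ (Fin 4)) :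
    slicedLSZPropagator ω B θ M i x y =
      ∫ t in Set.Icc (M ^ (-2 * (i : ℝ))) (M ^ (-2 * ((i : ℝ) - 1))), lszIntegrand ω B θ x y t :=
  rfl

lemma norm_lszIntegrand (ω B θ : ℝ) (x y : EuclideanSpace ℝ (Fin 4)) (t : ℝ) :
    ‖lszIntegrand ω B θ x y t‖ = ω ^ 2 / (2 * π * sinh (ω * t)) ^ 2 *
      exp (-(ω / 2) * (cosh (B * t) / sinh (ω * t) * ‖x - y‖ ^ 2
        + (cosh (ω * t) - cosh (B * t)) / sinh (ω * t) * (‖x‖ ^ 2 + ‖y‖ ^ 2))) := by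
  rw [lszIntegrand, norm_mul, Complex.norm_real, Real.norm_of_nonneg (by positivity),
    Complex.norm_exp]
  congr 2
  simp only [Complex.mul_re, Complex.add_re, Complex.mul_im, Complex.add_im, Complex.neg_re,
    Complex.neg_im, Complex.div_ofNat_re, Complex.div_ofNat_im, Complex.ofReal_re,
    Complex.ofReal_im, Complex.I_re, Complex.I_im]
  ring

lemma norm_lszIntegrand_le {ω B t : ℝ} (hB : 0 ≤ B) (hωB : B < ω) (ht : 0 < t) (ht1 : t ≤ 1)
    (θ : ℝ) (x y : EuclideanSpace ℝ (Fin 4)) :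
    ‖lszIntegrand ω B θ x y t‖ ≤ 1 / (4 * π ^ 2 * t ^ 2) *
      exp (-(‖x - y‖ ^ 2 / (2 * exp ω * t)) - (ω ^ 2 - B ^ 2) * t * ‖x + y‖ ^ 2 / (8 * exp ω)) := by
  have hω : 0 < ω := hB.trans_lt hωB
  have hgap : 0 < ω ^ 2 - B ^ 2 := by nlinarith
  have hωt : 0 < ω * t := mul_pos hω ht
  have hsinh_pos : 0 < sinh (ω * t) := sinh_pos_iff.2 hωt
  have hsinh_ge : ω * t ≤ sinh (ω * t) := self_le_sinh_iff.2 hωt.le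
  have hsinh_le : sinh (ω * t) ≤ ω * exp ω * t := sinh_mul_le_mul_exp hω.le ht.le ht1
  have hprefactor : ω ^ 2 / (2 * π * sinh (ω * t)) ^ 2 ≤ 1 / (4 * π ^ 2 * t ^ 2) :=
    calc ω ^ 2 / (2 * π * sinh (ω * t)) ^ 2 ≤ ω ^ 2 / (2 * π * (ω * t)) ^ 2 := by gcongr
      _ = 1 / (4 * π ^ 2 * t ^ 2) := by field_simp; ring
  have hdiag : 1 / (ω * exp ω * t) ≤ cosh (B * t) / sinh (ω * t) :=
    calc 1 / (ω * exp ω * t) ≤ 1 / sinh (ω * t) := by gcongr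
      _ ≤ cosh (B * t) / sinh (ω * t) := by gcongr; exact one_le_cosh _
  have hcosh : (ω ^ 2 - B ^ 2) * t ^ 2 / 2 ≤ cosh (ω * t) - cosh (B * t) := by
    have := sq_sub_sq_div_two_le_cosh_sub_cosh (mul_nonneg hB ht.le)
      (mul_le_mul_of_nonneg_right hωB.le ht.le)
    linarith
  have hoffdiag : (ω ^ 2 - B ^ 2) * t / (2 * ω * exp ω) ≤
      (cosh (ω * t) - cosh (B * t)) / sinh (ω * t) :=
    calc (ω ^ 2 - B ^ 2) * t / (2 * ω * exp ω)
        = (ω ^ 2 - B ^ 2) * t ^ 2 / 2 / (ω * exp ω * t) := by field_simp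
      _ ≤ (cosh (ω * t) - cosh (B * t)) / sinh (ω * t) := by
        gcongr
        exact (by positivity : (0 : ℝ) ≤ (ω ^ 2 - B ^ 2) * t ^ 2 / 2).trans hcosh
  have hsum : ‖x + y‖ ^ 2 ≤ 2 * (‖x‖ ^ 2 + ‖y‖ ^ 2) :=
    (pow_le_pow_left₀ (norm_nonneg _) (norm_add_le x y) 2).trans add_sq_le
  have hdiag_term : ‖x - y‖ ^ 2 / (2 * exp ω * t) ≤
      ω / 2 * (cosh (B * t) / sinh (ω * t) * ‖x - y‖ ^ 2) :=
    calc ‖x - y‖ ^ 2 / (2 * exp ω * t) = ω / 2 * (1 / (ω * exp ω * t) * ‖x - y‖ ^ 2) := by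
          field_simp
      _ ≤ _ := by gcongr
  have hoffdiag_term : (ω ^ 2 - B ^ 2) * t * ‖x + y‖ ^ 2 / (8 * exp ω) ≤
      ω / 2 * ((cosh (ω * t) - cosh (B * t)) / sinh (ω * t) * (‖x‖ ^ 2 + ‖y‖ ^ 2)) :=
    calc (ω ^ 2 - B ^ 2) * t * ‖x + y‖ ^ 2 / (8 * exp ω)
        = ω / 2 * ((ω ^ 2 - B ^ 2) * t / (2 * ω * exp ω) * (‖x + y‖ ^ 2 / 2)) := by
          field_simp; ring
      _ ≤ _ := by
        gcongr
        · exact (by positivity : (0 : ℝ) ≤ (ω ^ 2 - B ^ 2) * t / (2 * ω * exp ω)).trans hoffdiag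
        · linarith
  rw [norm_lszIntegrand]
  gcongr
  linarith

lemma norm_lszIntegrand_le_of_mem_slice {ω B M s t : ℝ} (hB : 0 ≤ B) (hωB : B < ω) (hM : 0 < M)
    (hMs : M ≤ s) (ht : t ∈ Set.Icc (s ^ 2)⁻¹ (M ^ 2 / s ^ 2)) (θ : ℝ)
    (x y : EuclideanSpace ℝ (Fin 4)) :
    ‖lszIntegrand ω B θ x y t‖ ≤ s ^ 4 / (4 * π ^ 2) *
      exp (exp ω * M ^ 2 / 2 + 2 * exp ω / (ω ^ 2 - B ^ 2)) *
        exp (-(s * ‖x - y‖ + s⁻¹ * ‖x + y‖)) := by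
  obtain ⟨ht_lo, ht_hi⟩ := ht
  have hs : 0 < s := hM.trans_le hMs
  have hgap : 0 < ω ^ 2 - B ^ 2 := by nlinarith
  have ht0 : 0 < t := (by positivity : (0 : ℝ) < (s ^ 2)⁻¹).trans_le ht_lo
  have ht1 : t ≤ 1 := ht_hi.trans ((div_le_one (by positivity)).2 (by gcongr))
  refine (norm_lszIntegrand_le hB hωB ht0 ht1 θ x y).trans ?_
  rw [mul_assoc (s ^ 4 / (4 * π ^ 2)), ← exp_add]
  gcongr ?_ * exp ?_
  · calc 1 / (4 * π ^ 2 * t ^ 2) ≤ 1 / (4 * π ^ 2 * ((s ^ 2)⁻¹) ^ 2) := by gcongr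
      _ = s ^ 4 / (4 * π ^ 2) := by field_simp
  · have hdiag : (s * ‖x - y‖) ^ 2 / (4 * (exp ω * M ^ 2 / 2)) ≤ ‖x - y‖ ^ 2 / (2 * exp ω * t) :=
      calc (s * ‖x - y‖) ^ 2 / (4 * (exp ω * M ^ 2 / 2))
          = ‖x - y‖ ^ 2 / (2 * exp ω * (M ^ 2 / s ^ 2)) := by field_simp; ring
        _ ≤ ‖x - y‖ ^ 2 / (2 * exp ω * t) := by gcongr
    have hoffdiag : (s⁻¹ * ‖x + y‖) ^ 2 / (4 * (2 * exp ω / (ω ^ 2 - B ^ 2))) ≤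
        (ω ^ 2 - B ^ 2) * t * ‖x + y‖ ^ 2 / (8 * exp ω) :=
      calc (s⁻¹ * ‖x + y‖) ^ 2 / (4 * (2 * exp ω / (ω ^ 2 - B ^ 2)))
          = (ω ^ 2 - B ^ 2) * (s ^ 2)⁻¹ * ‖x + y‖ ^ 2 / (8 * exp ω) := by field_simp; ring
        _ ≤ (ω ^ 2 - B ^ 2) * t * ‖x + y‖ ^ 2 / (8 * exp ω) := by gcongr
    linarith [neg_sq_div_four_mul_le_sub (by positivity : 0 < exp ω * M ^ 2 / 2) (s * ‖x - y‖),
      neg_sq_div_four_mul_le_sub (by positivity : 0 < 2 * exp ω / (ω ^ 2 - B ^ 2))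
        (s⁻¹ * ‖x + y‖)]

lemma norm_slicedLSZPropagator_le {ω B M : ℝ} (hB : 0 ≤ B) (hωB : B < ω) (hM : 1 < M) {i : ℕ}
    (hi : 1 ≤ i) (θ : ℝ) (x y : EuclideanSpace ℝ (Fin 4)) :
    ‖slicedLSZPropagator ω B θ M i x y‖ ≤
      M ^ 2 * exp (exp ω * M ^ 2 / 2 + 2 * exp ω / (ω ^ 2 - B ^ 2)) / (4 * π ^ 2) *
        (M ^ i) ^ 2 * exp (-(M ^ i * ‖x - y‖ + (M ^ i)⁻¹ * ‖x + y‖)) := by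
  have hM0 : 0 < M := one_pos.trans hM
  set s := M ^ i
  have hs : 0 < s := by positivity
  have hMs : M ≤ s := le_self_pow₀ hM.le (by omega)
  rw [slicedLSZPropagator_eq_setIntegral, rpow_neg_two_mul_natCast hM0,
    rpow_neg_two_mul_natCast_sub_one hM0]
  refine (norm_setIntegral_le_of_norm_le_const measure_Icc_lt_top
    fun t ht ↦ norm_lszIntegrand_le_of_mem_slice hB hωB hM0 hMs ht θ x y).trans ?_
  have hlength : volume.real (Set.Icc (s ^ 2)⁻¹ (M ^ 2 / s ^ 2)) ≤ M ^ 2 / s ^ 2 := by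
    rw [volume_real_Icc]
    exact max_le (sub_le_self _ (by positivity)) (by positivity)
  calc _ ≤ s ^ 4 / (4 * π ^ 2) * exp (exp ω * M ^ 2 / 2 + 2 * exp ω / (ω ^ 2 - B ^ 2)) *
          exp (-(s * ‖x - y‖ + s⁻¹ * ‖x + y‖)) * (M ^ 2 / s ^ 2) := by gcongr
    _ = _ := by field_simp

theorem sliced_LSZ_propagator_bound_general (ω B M θ : ℝ)
    (hB : 0 ≤ B) (hωB : B < ω) (hM : 1 < M) :
    ∃ K c : ℝ, 0 < K ∧ 0 < c ∧
      ∀ i : ℕ, 1 ≤ i → ∀ x y : EuclideanSpace ℝ (Fin 4),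
        ‖slicedLSZPropagator ω B θ M i x y‖ ≤
          K * M ^ (2 * (i : ℝ)) *
            Real.exp (-c * (M ^ (i : ℝ) * ‖x - y‖ + M ^ (-(i : ℝ)) * ‖x + y‖)) := by
  refine ⟨M ^ 2 * exp (exp ω * M ^ 2 / 2 + 2 * exp ω / (ω ^ 2 - B ^ 2)) / (4 * π ^ 2), 1,
    by positivity, one_pos, fun i hi x y ↦ ?_⟩
  rw [show 2 * (i : ℝ) = ((i * 2 : ℕ) : ℝ) by push_cast; ring, rpow_natCast, pow_mul,
    rpow_neg (one_pos.trans hM).le, rpow_natCast, neg_one_mul]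
  exact norm_slicedLSZPropagator_le hB hωB hM hi θ x y

/-- The sliced LSZ propagator obeys the same short/long-variable scaled bound as the
Grosse–Wulkenhaar propagator. -/
theorem sliced_LSZ_propagator_bound (ω B M θ : ℝ)
    (hB : 0 ≤ B) (hωB : B < ω) (hM : 1 < M) (hθ : 0 < θ) :
    ∃ K c : ℝ, 0 < K ∧ 0 < c ∧
      ∀ i : ℕ, 1 ≤ i → ∀ x y : EuclideanSpace ℝ (Fin 4),
        ‖slicedLSZPropagator ω B θ M i x y‖ ≤
          K * M ^ (2 * (i : ℝ)) *
            Real.exp (-c * (M ^ (i : ℝ) * ‖x - y‖ + M ^ (-(i : ℝ)) * ‖x + y‖)) :=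
  sliced_LSZ_propagator_bound_general ω B M θ hB hωB hM
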